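/- arXiv:1407.4426 — 2 statements merged into one kernel-verified Lean document; each statement's English description precedes it below -/
import Mathlib

section
/- Let G be a finite cyclic-by-abelian group with a maximal cyclic normal subgroup C such that every faithful irreducible complex character of G is induced from a faithful linear character of C. Then all faithful irreducible characters of G form a single Galois conjugacy class: for any two faithful irreducible characters χ, φ of G there exists a Galois automorphism σ of ℚ(ζ_{|G|})/ℚ with φ = χ^σ. -/
open scoped TensorProduct

/-- `A` is the cyclic algebra `(L/K, σ, a)`. -/
def IsCyclicAlgebra (K : Type*) [Field K] (L : Type*) [Field L] [Algebra K L]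
    (σ : L ≃ₐ[K] L) (a : L) (A : Type*) [Ring A] [Algebra K A] : Prop :=
  ∃ (ι : L →ₐ[K] A) (u : Aˣ),
    (u : A) ^ Module.finrank K L = ι a ∧
    (∀ x : L, (u : A) * ι x = ι (σ x) * (u : A)) ∧
    Function.Bijective fun f : Fin (Module.finrank K L) → L =>
      ∑ i, ι (f i) * (u : A) ^ (i : ℕ)

/-- The Schur index of a central simple `K`-algebra. -/
noncomputable def schurIndex (K A : Type*) [Field K] [Ring A] [Algebra K A] : ℕ :=
  sInf {m | ∃ (D : Type) (_ : DivisionRing D) (_ : Algebra K D) (r : ℕ),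
      Nonempty (A ≃ₐ[K] Matrix (Fin r) (Fin r) D) ∧ m * m = Module.finrank K D}

/-- Local index at a real embedding. -/
noncomputable def realLocalIndex (K A : Type*) [Field K] [Ring A] [Algebra K A]
    (φ : K →+* ℝ) : ℕ :=
  letI := φ.toAlgebra
  schurIndex ℝ (ℝ ⊗[K] A)

def IsBrauerEquiv (K A B : Type*) [Field K] [Ring A] [Algebra K A] [Ring B] [Algebra K B] :
    Prop :=
  ∃ r s : ℕ, 0 < r ∧ 0 < s ∧
    Nonempty (Matrix (Fin r) (Fin r) A ≃ₐ[K] Matrix (Fin s) (Fin s) B)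

/-- The simple component `Re` of `R`, realized as `R/(1-e)`. -/
abbrev simpleComponent (R : Type*) [Ring R] (e : R) : Type _ :=
  (TwoSidedIdeal.span {1 - e}).ringCon.Quotient

noncomputable instance (F R : Type*) [CommSemiring F] [Ring R] [Algebra F R] (e : R) :
    Algebra F (simpleComponent R e) :=
  RingHom.toAlgebra' ((TwoSidedIdeal.span {1 - e}).ringCon.mk'.comp (algebraMap F R)) <| by
    intro c x
    induction x using Quotient.inductionOn' with
    | h x =>
        show ((algebraMap F R c : R) : simpleComponent R e) * (x : simpleComponent R e)
          = (x : simpleComponent R e) * ((algebraMap F R c : R) : simpleComponent R e)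
        rw [← RingCon.coe_mul, ← RingCon.coe_mul, Algebra.commutes]

/-- `e` is a centrally primitive idempotent. -/
def IsCentrallyPrimitiveIdempotent (R : Type*) [Ring R] (e : R) : Prop :=
  e ∈ Subring.center R ∧ e * e = e ∧ e ≠ 0 ∧
    ∀ a b : R, a ∈ Subring.center R → b ∈ Subring.center R → a * a = a → b * b = b →
      a * b = 0 → e = a + b → a = 0 ∨ b = 0


open Classical in
/-- The character of `G` induced from the class function `lam` on the subgroup `C`. -/
noncomputable def inducedChar {G : Type*} [Group G] [Fintype G] (C : Subgroup G)
    (lam : C → ℂ) : G → ℂ := fun g =>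
  (Nat.card C : ℂ)⁻¹ * ∑ x : G, if h : x⁻¹ * g * x ∈ C then lam ⟨x⁻¹ * g * x, h⟩ else 0

/-!
A faithful linear character `λ` of the cyclic group `C` sends a generator to a primitive
`|C|`-th root of unity, so any other one is `λ ^ k` with `k` prime to `|C|`. Lift `k` to a
unit `u` modulo `|G|`: the automorphism of `ℚ(ζ)` with `ζ ↦ ζ ^ u` raises every `|G|`-th root
of unity to the `u`-th power, so it turns `λ` into `λ ^ k`, and, the formula for an induced
character being a rational expression in the values of `λ`, it turns `λ^G` into `(λ ^ k)^G`.
-/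

open Function

theorem MonoidHom.exists_coprime_pow_eq_of_injective {C R : Type*} [Group C] [Finite C]
    [IsCyclic C] [CommRing R] [IsDomain R] {χ ψ : C →* Rˣ} (hχ : Injective χ)
    (hψ : Injective ψ) : ∃ k, k.Coprime (Nat.card C) ∧ ∀ c, ψ c = χ c ^ k := by
  obtain ⟨c₀, hc₀⟩ := IsCyclic.exists_generator (α := C)
  have hprim {φ : C →* Rˣ} (hφ : Injective φ) : IsPrimitiveRoot (φ c₀) (Nat.card C) := by
    rw [← orderOf_eq_card_of_forall_mem_zpowers hc₀, ← orderOf_injective φ hφ]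
    exact IsPrimitiveRoot.orderOf _
  obtain ⟨k, -, hk, hψc₀⟩ := (hprim hχ).isPrimitiveRoot_iff'.mp (hprim hψ)
  refine ⟨k, hk, fun c => ?_⟩
  obtain ⟨j, rfl⟩ := Subgroup.mem_zpowers_iff.mp (hc₀ c)
  rw [map_zpow, map_zpow, ← hψc₀, ← zpow_natCast, ← zpow_natCast, ← zpow_mul, ← zpow_mul,
    mul_comm]

theorem ZMod.exists_unit_pow_eq_pow {M : Type*} [Group M] {m n k : ℕ} [NeZero n] (hmn : m ∣ n)
    (hk : k.Coprime m) :
    ∃ u : (ZMod n)ˣ, ∀ x : M, x ^ m = 1 → x ^ (u : ZMod n).val = x ^ k := by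
  obtain ⟨u, hu⟩ := ZMod.unitsMap_surjective hmn (ZMod.unitOfCoprime k hk)
  have hmod : (u : ZMod n).val ≡ k [MOD m] := by
    rw [← ZMod.natCast_eq_natCast_iff, ZMod.natCast_val, ← ZMod.castHom_apply (h := hmn)]
    simpa [ZMod.unitsMap_def] using congrArg Units.val hu
  exact ⟨u, fun x hx => pow_eq_pow_iff_modEq.mpr (hmod.of_dvd (orderOf_dvd_of_pow_eq_one hx))⟩

theorem IsPrimitiveRoot.isCyclotomicExtension_adjoin (K : Type*) {L : Type*} [Field K] [Field L]
    [Algebra K L] {n : ℕ} [NeZero n] {ζ : L} (hζ : IsPrimitiveRoot ζ n) :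
    IsCyclotomicExtension {n} K (IntermediateField.adjoin K {ζ}) := by
  change IsCyclotomicExtension {n} K (IntermediateField.adjoin K {ζ}).toSubalgebra
  rw [IntermediateField.adjoin_simple_toSubalgebra_of_isAlgebraic
    (hζ.isIntegral (NeZero.pos n)).tower_top.isAlgebraic]
  exact hζ.adjoin_isCyclotomicExtension K

theorem IsPrimitiveRoot.mem_adjoin_of_pow_eq_one {K L : Type*} [Field K] [Field L] [Algebra K L]
    {n : ℕ} [NeZero n] {ζ z : L} (hζ : IsPrimitiveRoot ζ n) (hz : z ^ n = 1) :
    z ∈ IntermediateField.adjoin K {ζ} := by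
  obtain ⟨i, -, rfl⟩ := hζ.eq_pow_of_pow_eq_one hz
  exact pow_mem (IntermediateField.mem_adjoin_simple_self K ζ) i

section InducedFun

variable {G : Type*} [Group G] [Fintype G] (C : Subgroup G)

open Classical in
noncomputable def inducedFun {K : Type*} [DivisionRing K] (lam : C → K) (g : G) : K :=
  (Nat.card C : K)⁻¹ * ∑ x : G, if h : x⁻¹ * g * x ∈ C then lam ⟨x⁻¹ * g * x, h⟩ else 0

theorem inducedChar_eq_inducedFun (lam : C → ℂ) : inducedChar C lam = inducedFun C lam :=
  rfl

theorem map_inducedFun {K K' F : Type*} [DivisionRing K] [DivisionRing K'] [FunLike F K K']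
    [RingHomClass F K K'] (f : F) (lam : C → K) (g : G) :
    f (inducedFun C lam g) = inducedFun C (f ∘ lam) g := by
  simp only [inducedFun, map_mul, map_inv₀, map_natCast, map_sum, apply_dite f, map_zero,
    comp_apply]

end InducedFun

theorem schur_stmt15_general (G : Type) [Group G] [Fintype G]
    (C : Subgroup G) (hC : IsCyclic C)
    (hind : ∀ V : FDRep ℂ G, CategoryTheory.Simple V → Function.Injective ⇑V.ρ →
      ∃ lam : C →* ℂˣ, Function.Injective ⇑lam ∧
        ∀ g : G, V.character g = inducedChar C (fun c => (lam c : ℂ)) g)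
    (ζ : ℂ) (hζ : IsPrimitiveRoot ζ (Nat.card G))
    (hval : ∀ (V : FDRep ℂ G) (g : G), V.character g ∈ IntermediateField.adjoin ℚ {ζ})
    (V W : FDRep ℂ G) (hVs : CategoryTheory.Simple V) (hWs : CategoryTheory.Simple W)
    (hVf : Function.Injective ⇑V.ρ) (hWf : Function.Injective ⇑W.ρ) :
    ∃ σ : IntermediateField.adjoin ℚ {ζ} ≃ₐ[ℚ] IntermediateField.adjoin ℚ {ζ},
      ∀ g : G, W.character g = (σ ⟨V.character g, hval V g⟩ : ℂ) := by
  let L := IntermediateField.adjoin ℚ {ζ}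
  obtain ⟨χ, hχ, hVχ⟩ := hind V hVs hVf
  obtain ⟨ψ, hψ, hWψ⟩ := hind W hWs hWf
  obtain ⟨k, hk, hψχ⟩ := χ.exists_coprime_pow_eq_of_injective hχ hψ
  obtain ⟨u, hu⟩ := ZMod.exists_unit_pow_eq_pow (M := ℂˣ) C.card_subgroup_dvd_card hk
  have hχn (c : C) : (χ c : ℂ) ^ Nat.card G = 1 := by
    have : c ^ Nat.card G = 1 := Subtype.ext (pow_card_eq_one' (G := G))
    rw [← Units.val_pow_eq_pow_val, ← map_pow, this, map_one, Units.val_one]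
  let χL (c : C) : L := ⟨χ c, hζ.mem_adjoin_of_pow_eq_one (hχn c)⟩
  have hV (g : G) : (⟨V.character g, hval V g⟩ : L) = inducedFun C χL g :=
    Subtype.ext <| (hVχ g).trans (map_inducedFun C (algebraMap L ℂ) χL g).symm
  have : IsCyclotomicExtension {Nat.card G} ℚ L := hζ.isCyclotomicExtension_adjoin ℚ
  have : NumberField L := IsCyclotomicExtension.numberField {Nat.card G} ℚ L
  let σ := (IsCyclotomicExtension.Rat.galEquivZMod (Nat.card G) L).symm u
  have hσ (c : C) : ((σ (χL c) : L) : ℂ) = ψ c := by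
    rw [IsCyclotomicExtension.Rat.galEquivZMod_apply_of_pow_eq _ L σ (Subtype.ext (hχn c)),
      MulEquiv.apply_symm_apply, IntermediateField.coe_pow, ← Units.val_pow_eq_pow_val,
      hu _ (by rw [← map_pow, pow_card_eq_one', map_one]), hψχ]
  refine ⟨σ, fun g => ?_⟩
  rw [hV, map_inducedFun C σ, hWψ, inducedChar_eq_inducedFun]
  simp_rw [← hσ]
  exact (map_inducedFun C (algebraMap L ℂ) _ g).symm

theorem schur_stmt15 (G : Type) [Group G] [Fintype G]
    (hcyab : ∃ (N : Subgroup G) (_ : N.Normal), IsCyclic N ∧ ∀ x y : G ⧸ N, x * y = y * x)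
    (C : Subgroup G) [C.Normal] (hC : IsCyclic C)
    (hmax : ∀ C' : Subgroup G, C'.Normal → IsCyclic C' → C ≤ C' → C' = C)
    (hind : ∀ V : FDRep ℂ G, CategoryTheory.Simple V → Function.Injective ⇑V.ρ →
      ∃ lam : C →* ℂˣ, Function.Injective ⇑lam ∧
        ∀ g : G, V.character g = inducedChar C (fun c => (lam c : ℂ)) g)
    (ζ : ℂ) (hζ : IsPrimitiveRoot ζ (Nat.card G))
    (hval : ∀ (V : FDRep ℂ G) (g : G), V.character g ∈ IntermediateField.adjoin ℚ {ζ})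
    (V W : FDRep ℂ G) (hVs : CategoryTheory.Simple V) (hWs : CategoryTheory.Simple W)
    (hVf : Function.Injective ⇑V.ρ) (hWf : Function.Injective ⇑W.ρ) :
    ∃ σ : IntermediateField.adjoin ℚ {ζ} ≃ₐ[ℚ] IntermediateField.adjoin ℚ {ζ},
      ∀ g : G, W.character g = (σ ⟨V.character g, hval V g⟩ : ℂ) :=
  schur_stmt15_general G C hC hind ζ hζ hval V W hVs hWs hVf hWf
end

section
/- Consider the crossed product algebra A = ⊕_{i,j} L u^i v^j over F with L = F(ζ_n), where u^{a_1} = ζ_n^{c_1}, uζ_n = ζ_n^{b_1}u, v^{a_2} = ζ_n^{c_2}, vζ_n = ζ_n^{b_2}v, and vu = uvζ_n^d, with Gal(L/F) = ⟨σ_{b_1}⟩ × ⟨σ_{b_2}⟩. If c ∈ L^× satisfies σ_{b_2}(c)·ζ_n^{d·b_1·b_2} = c and (cu)^{a_1} ∈ F^×, then A is isomorphic as an F-algebra to the tensor product of cyclic algebras (L^{⟨σ_{b_2}⟩}/F, σ, (cu)^{a_1}) ⊗_F (L^{⟨σ_{b_1}⟩}/F, φ, v^{a_2}), where σ, φ are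 the automorphisms induced by σ_{b_1}, σ_{b_2} on the respective fixed fields. -/
open scoped TensorProduct

/-- `A` is the crossed product `⊕ L uⁱ vʲ` with the given relations. -/
def IsTwoGenCrossedProduct (F : Type*) [Field F] (L : Type*) [Field L] [Algebra F L]
    (σ₁ σ₂ : L ≃ₐ[F] L) (x₁ x₂ y : L) (A : Type*) [Ring A] [Algebra F A] : Prop :=
  ∃ (ι : L →ₐ[F] A) (u v : Aˣ),
    (u : A) ^ orderOf σ₁ = ι x₁ ∧ (v : A) ^ orderOf σ₂ = ι x₂ ∧
    (∀ x : L, (u : A) * ι x = ι (σ₁ x) * (u : A)) ∧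
    (∀ x : L, (v : A) * ι x = ι (σ₂ x) * (v : A)) ∧
    ((v : A) * (u : A) = (u : A) * (v : A) * ι y) ∧
    Function.Bijective fun f : Fin (orderOf σ₁) × Fin (orderOf σ₂) → L =>
      ∑ ij, ι (f ij) * (u : A) ^ (ij.1 : ℕ) * (v : A) ^ (ij.2 : ℕ)

/-!
Replace `u` by `u' = ι c * u`. Then `u'` still acts on `L` through `σ₁`, its `a₁`-th power is
`ι ((∏ i < a₁, σ₁ⁱ c) * ζ^c₁) = ι w₁`, and the relation `σ₂(c) ζ^(d b₁ b₂) = c` is exactly what makes `u'`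
commute with `v`; moreover `u'` commutes with the field `K₂` fixed by `σ₁` and `v` with the field
`K₁` fixed by `σ₂`. By the universal property of cyclic algebras, `(K₁, u')` and `(K₂, v)` give
algebra maps `B₁ → A`, `B₂ → A` with commuting images, hence `B₁ ⊗ B₂ → A`. Since the two cyclic
subgroups of the Galois group meet trivially, `K₁ K₂ = L`, so the image contains `L`, `u` and
`v` and the map is onto; both sides have dimension `(a₁ a₂)²`, so it is an isomorphism.
-/

open Module Function IntermediateField Subgroup

section Twisted

variable {F K A : Type*} [CommSemiring F] [CommSemiring K] [Algebra F K] [Semiring A]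
  [Algebra F A] {ι : K →ₐ[F] A} {σ : K ≃ₐ[F] K} {t : A}

def IsTwisted (ι : K →ₐ[F] A) (σ : K ≃ₐ[F] K) (t : A) : Prop :=
  ∀ x, t * ι x = ι (σ x) * t

theorem IsTwisted.pow (h : IsTwisted ι σ t) (k : ℕ) : IsTwisted ι (σ ^ k) (t ^ k) := by
  induction k with
  | zero => intro x; simp
  | succ k ih =>
    intro x
    rw [pow_succ, pow_succ, AlgEquiv.mul_apply, mul_assoc, h, ← mul_assoc, ih, mul_assoc]

theorem IsTwisted.monomial_mul_monomial (h : IsTwisted ι σ t) (z z' : K) (s r : ℕ) :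
    ι z * t ^ s * (ι z' * t ^ r) = ι (z * (σ ^ s) z') * t ^ (s + r) := by
  rw [mul_assoc, ← mul_assoc (t ^ s), h.pow s, map_mul, pow_add]
  simp only [mul_assoc]

theorem IsTwisted.map_mul_left (h : IsTwisted ι σ t) (c : K) : IsTwisted ι σ (ι c * t) := by
  intro x
  rw [mul_assoc, h, ← mul_assoc, ← mul_assoc, ← map_mul, ← map_mul, mul_comm]

theorem IsTwisted.map_mul_left_pow (h : IsTwisted ι σ t) (c : K) (k : ℕ) :
    (ι c * t) ^ k = ι (∏ i ∈ Finset.range k, (σ ^ i) c) * t ^ k := by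
  induction k with
  | zero => simp
  | succ k ih =>
    rw [pow_succ, ih, Finset.prod_range_succ]
    simpa only [pow_one] using h.monomial_mul_monomial (∏ i ∈ Finset.range k, (σ ^ i) c) c k 1

theorem IsTwisted.commute_of_fixed (h : IsTwisted ι σ t) {x : K} (hx : σ x = x) :
    Commute t (ι x) := by
  rw [commute_iff_eq, h, hx]

theorem IsTwisted.comp {K' : Type*} [CommSemiring K'] [Algebra F K'] (h : IsTwisted ι σ t)
    (e : K' →ₐ[F] K) {σ' : K' ≃ₐ[F] K'} (he : ∀ x, e (σ' x) = σ (e x)) :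
    IsTwisted (ι.comp e) σ' t := by
  intro x
  simp only [AlgHom.comp_apply, he]
  exact h (e x)

theorem IsTwisted.commute_map_mul_left {σ₂ : K ≃ₐ[F] K} {u v : A} (hu : IsTwisted ι σ u)
    (hv : IsTwisted ι σ₂ v) {y c : K} (hvu : v * u = u * v * ι y)
    (hc : σ₂ c * σ (σ₂ y) = c) : Commute (ι c * u) v := by
  symm
  calc v * (ι c * u) = ι (σ₂ c) * (v * u) := by rw [← mul_assoc, hv, mul_assoc]
    _ = ι (σ₂ c) * (u * ι (σ₂ y)) * v := by rw [hvu, mul_assoc u, hv]; simp only [mul_assoc]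
    _ = ι c * u * v := by rw [hu, ← mul_assoc, ← map_mul, hc]

end Twisted

section SumMul

variable {F K A ι' : Type*} [Fintype ι']

/-- Bijective exactly when the `q i` form a basis of `A` as a left `K`-module through `j`. -/
def AlgHom.sumMulLinearMap [CommSemiring F] [Semiring K] [Algebra F K] [Semiring A] [Algebra F A]
    (j : K →ₐ[F] A) (q : ι' → A) : (ι' → K) →ₗ[F] A where
  toFun f := ∑ i, j (f i) * q i
  map_add' f g := by simp only [Pi.add_apply, map_add, add_mul, Finset.sum_add_distrib]
  map_smul' r f := by simp only [Pi.smul_apply, map_smul, smul_mul_assoc, Finset.smul_sum,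
    RingHom.id_apply]

section Semiring

variable [CommSemiring F] [Semiring K] [Algebra F K] [Semiring A] [Algebra F A]
  (j : K →ₐ[F] A) (q : ι' → A)

theorem AlgHom.coe_sumMulLinearMap : ⇑(j.sumMulLinearMap q) = fun f => ∑ i, j (f i) * q i :=
  rfl

theorem AlgHom.sumMulLinearMap_single [DecidableEq ι'] (i : ι') (z : K) :
    j.sumMulLinearMap q (Pi.single i z) = j z * q i := by
  show ∑ k, j ((Pi.single i z : ι' → K) k) * q k = j z * q i
  rw [Fintype.sum_eq_single i fun k hk => by
    rw [Pi.single_eq_of_ne hk, map_zero, zero_mul], Pi.single_eq_same]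

variable {j q}

theorem AlgHom.span_range_mul_eq_top (h : Surjective (j.sumMulLinearMap q)) :
    Submodule.span F (Set.range fun p : ι' × K => j p.2 * q p.1) = ⊤ := by
  refine eq_top_iff.2 fun b _ => ?_
  obtain ⟨f, rfl⟩ := h b
  exact Submodule.sum_mem _ fun i _ => Submodule.subset_span ⟨(i, f i), rfl⟩

theorem Subalgebra.eq_top_of_sumMulLinearMap_surjective (h : Surjective (j.sumMulLinearMap q))
    {S : Subalgebra F A} (hj : ∀ x, j x ∈ S) (hq : ∀ i, q i ∈ S) : S = ⊤ := by
  refine eq_top_iff.2 fun b _ => ?_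
  obtain ⟨f, rfl⟩ := h b
  exact sum_mem fun i _ => mul_mem (hj _) (hq i)

end Semiring

theorem AlgHom.finrank_eq_of_sumMulLinearMap_bijective [Field F] [Ring K] [Algebra F K]
    [Ring A] [Algebra F A] [FiniteDimensional F K] {j : K →ₐ[F] A} {q : ι' → A}
    (h : Bijective (j.sumMulLinearMap q)) :
    finrank F A = Fintype.card ι' * finrank F K := by
  rw [← (LinearEquiv.ofBijective _ h).finrank_eq, finrank_pi_fintype, Finset.sum_const,
    Finset.card_univ, smul_eq_mul]

end SumMul

section CyclicAlgebra

variable {F K B A : Type*} [Field F] [Field K] [Algebra F K] [Ring B] [Algebra F B] [Ring A]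
  [Algebra F A] {m : ℕ} {σ : K ≃ₐ[F] K} {a : K} {ι : K →ₐ[F] B} {u : B} {j : K →ₐ[F] A} {U : A}

/-- The universal property of the cyclic algebra `(K/F, σ, a)`. -/
theorem exists_algHom_of_isTwisted (hm : 0 < m) (hu : u ^ m = ι a) (huι : IsTwisted ι σ u)
    (hbij : Bijective (ι.sumMulLinearMap fun i : Fin m => u ^ (i : ℕ)))
    (hU : U ^ m = j a) (hUj : IsTwisted j σ U) :
    ∃ f : B →ₐ[F] A, (∀ x, f (ι x) = j x) ∧ f u = U := by
  let e := LinearEquiv.ofBijective _ hbij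
  let f₀ : B →ₗ[F] A := (j.sumMulLinearMap fun i : Fin m => U ^ (i : ℕ)) ∘ₗ e.symm.toLinearMap
  have hmono : ∀ (s : ℕ) (z : K), f₀ (ι z * u ^ s) = j z * U ^ s := by
    intro s
    induction s using Nat.strong_induction_on with
    | _ s ih =>
      intro z
      obtain hs | hs := lt_or_ge s m
      · have : ι z * u ^ s = e (Pi.single (⟨s, hs⟩ : Fin m) z) :=
          (ι.sumMulLinearMap_single (fun i : Fin m => u ^ (i : ℕ)) ⟨s, hs⟩ z).symm
        simp only [f₀, this, LinearMap.comp_apply, LinearEquiv.coe_coe,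
          LinearEquiv.symm_apply_apply, AlgHom.sumMulLinearMap_single]
      · obtain ⟨r, rfl⟩ := Nat.exists_eq_add_of_le hs
        rw [pow_add, hu, ← mul_assoc, ← map_mul, ih r (by omega), pow_add, hU, map_mul,
          mul_assoc]
  have hmul : ∀ b b', f₀ (b * b') = f₀ b * f₀ b' := by
    have hspan := ι.span_range_mul_eq_top hbij.2
    suffices (LinearMap.mul F B).compr₂ f₀ = (LinearMap.mul F A).compl₁₂ f₀ f₀ from
      fun b b' => LinearMap.congr_fun₂ this b b'
    refine LinearMap.ext_on hspan fun _ hb => LinearMap.ext_on hspan fun _ hb' => ?_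
    obtain ⟨⟨s, z⟩, rfl⟩ := hb
    obtain ⟨⟨r, z'⟩, rfl⟩ := hb'
    simp only [LinearMap.compr₂_apply, LinearMap.compl₁₂_apply, LinearMap.mul_apply',
      huι.monomial_mul_monomial, hUj.monomial_mul_monomial, hmono]
  have hone : f₀ 1 = 1 := by simpa using hmono 0 1
  refine ⟨AlgHom.ofLinearMap f₀ hone hmul, fun x => by simpa using hmono 0 x, ?_⟩
  simpa using hmono 1 1

variable [FiniteDimensional F K]

theorem IsCyclicAlgebra.exists_algHom_range_eq (hB : IsCyclicAlgebra F K σ a B)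
    (hU : U ^ finrank F K = j a) (hUj : IsTwisted j σ U) :
    ∃ f : B →ₐ[F] A, f.range = Algebra.adjoin F (insert U (Set.range j)) := by
  obtain ⟨ι, u, hu, huι, hbij⟩ := hB
  obtain ⟨f, hfι, hfu⟩ := exists_algHom_of_isTwisted finrank_pos hu huι hbij hU hUj
  refine ⟨f, le_antisymm ?_ (Algebra.adjoin_le ?_)⟩
  · rintro _ ⟨b, rfl⟩
    have hcomap : (Algebra.adjoin F (insert U (Set.range j))).comap f = ⊤ :=
      Subalgebra.eq_top_of_sumMulLinearMap_surjective hbij.2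
        (fun x => Algebra.subset_adjoin (Set.mem_insert_of_mem _ ⟨x, (hfι x).symm⟩))
        (fun i => by
          simpa [hfu] using pow_mem (Algebra.subset_adjoin (Set.mem_insert U _)) (i : ℕ))
    exact hcomap.ge (Algebra.mem_top (x := b))
  · rintro _ (rfl | ⟨x, rfl⟩)
    · exact ⟨u, hfu⟩
    · exact ⟨ι x, hfι x⟩

theorem IsCyclicAlgebra.finrank_eq (hB : IsCyclicAlgebra F K σ a B) :
    finrank F B = finrank F K * finrank F K := by
  obtain ⟨ι, u, -, -, hbij⟩ := hB
  rw [ι.finrank_eq_of_sumMulLinearMap_bijective hbij, Fintype.card_fin]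

end CyclicAlgebra

def IsUniquePowerProduct {G : Type*} [Monoid G] (σ₁ σ₂ : G) : Prop :=
  Bijective fun ij : Fin (orderOf σ₁) × Fin (orderOf σ₂) => σ₁ ^ (ij.1 : ℕ) * σ₂ ^ (ij.2 : ℕ)

section UniquePowerProduct

variable {G : Type*} [Group G] {σ₁ σ₂ : G}

theorem IsUniquePowerProduct.card_eq (h : IsUniquePowerProduct σ₁ σ₂) :
    Nat.card G = orderOf σ₁ * orderOf σ₂ := by
  rw [← Nat.card_eq_of_bijective _ h, Nat.card_prod, Nat.card_fin, Nat.card_fin]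

theorem IsUniquePowerProduct.zpowers_inf_zpowers_eq_bot (h : IsUniquePowerProduct σ₁ σ₂) :
    zpowers σ₁ ⊓ zpowers σ₂ = ⊥ := by
  have : Finite G := .of_surjective _ h.2
  rw [eq_bot_iff]
  rintro τ ⟨h₁, h₂⟩
  obtain ⟨i, rfl⟩ := (mem_powers_iff_mem_zpowers).2 h₁
  obtain ⟨k, hk⟩ := (mem_powers_iff_mem_zpowers).2 h₂
  have key := @h.1 (⟨i % orderOf σ₁, Nat.mod_lt _ (orderOf_pos σ₁)⟩, ⟨0, orderOf_pos σ₂⟩)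
    (⟨0, orderOf_pos σ₁⟩, ⟨k % orderOf σ₂, Nat.mod_lt _ (orderOf_pos σ₂)⟩)
    (by simp only [pow_mod_orderOf, hk, pow_zero, mul_one, one_mul])
  have hi : i % orderOf σ₁ = 0 := congrArg (fun ij => (ij.1 : ℕ)) key
  change σ₁ ^ i = 1
  rw [← pow_mod_orderOf, hi, pow_zero]

end UniquePowerProduct

section Galois

variable {F L : Type*} [Field F] [Field L] [Algebra F L] [FiniteDimensional F L]

theorem IntermediateField.finrank_fixedField_mul_card (H : Subgroup (L ≃ₐ[F] L)) :
    finrank F (fixedField H) * Nat.card H = finrank F L := by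
  rw [← finrank_fixedField_eq_card, finrank_mul_finrank]

theorem IntermediateField.map_mem_of_sup_eq_top {A : Type*} [Ring A] [Algebra F A]
    {K₁ K₂ : IntermediateField F L} (h : K₁ ⊔ K₂ = ⊤) (ι : L →ₐ[F] A) {S : Subalgebra F A}
    (h₁ : ∀ x : K₁, ι x ∈ S) (h₂ : ∀ x : K₂, ι x ∈ S) (x : L) : ι x ∈ S := by
  have hsup : K₁.toSubalgebra ⊔ K₂.toSubalgebra = ⊤ := by
    rw [← sup_toSubalgebra_of_left, h, top_toSubalgebra]
  have hle : K₁.toSubalgebra ⊔ K₂.toSubalgebra ≤ S.comap ι :=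
    sup_le (fun y hy => h₁ ⟨y, hy⟩) fun y hy => h₂ ⟨y, hy⟩
  exact hle (hsup ▸ Algebra.mem_top)

variable [IsGalois F L]

theorem IntermediateField.fixedField_sup_fixedField_eq_top
    {H₁ H₂ : Subgroup (L ≃ₐ[F] L)} (h : H₁ ⊓ H₂ = ⊥) : fixedField H₁ ⊔ fixedField H₂ = ⊤ := by
  rw [← IsGalois.fixedField_fixingSubgroup (fixedField H₁ ⊔ fixedField H₂), fixingSubgroup_sup,
    fixingSubgroup_fixedField, fixingSubgroup_fixedField, h, fixedField_bot]

variable {σ₁ σ₂ : L ≃ₐ[F] L}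

theorem IsUniquePowerProduct.finrank_eq (h : IsUniquePowerProduct σ₁ σ₂) :
    finrank F L = orderOf σ₁ * orderOf σ₂ := by
  rw [← IsGalois.card_aut_eq_finrank, h.card_eq]

theorem IsUniquePowerProduct.finrank_fixedField_zpowers_right (h : IsUniquePowerProduct σ₁ σ₂) :
    finrank F (fixedField (zpowers σ₂)) = orderOf σ₁ :=
  Nat.eq_of_mul_eq_mul_right (orderOf_pos σ₂) <| by
    rw [← h.finrank_eq, ← Nat.card_zpowers, finrank_fixedField_mul_card]

theorem IsUniquePowerProduct.finrank_fixedField_zpowers_left (h : IsUniquePowerProduct σ₁ σ₂) :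
    finrank F (fixedField (zpowers σ₁)) = orderOf σ₂ :=
  Nat.eq_of_mul_eq_mul_right (orderOf_pos σ₁) <| by
    rw [mul_comm (orderOf σ₂), ← h.finrank_eq, ← Nat.card_zpowers, finrank_fixedField_mul_card]

theorem IsUniquePowerProduct.fixedField_zpowers_sup_eq_top (h : IsUniquePowerProduct σ₁ σ₂) :
    fixedField (zpowers σ₂) ⊔ fixedField (zpowers σ₁) = ⊤ :=
  fixedField_sup_fixedField_eq_top <| by rw [inf_comm, h.zpowers_inf_zpowers_eq_bot]

end Galois

theorem Algebra.commute_of_mem_adjoin_of_mem_adjoin {R A : Type*} [CommSemiring R] [Semiring A]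
    [Algebra R A] {s t : Set A} (hst : ∀ x ∈ s, ∀ y ∈ t, Commute x y) {a b : A}
    (ha : a ∈ adjoin R s) (hb : b ∈ adjoin R t) : Commute a b :=
  commute_of_mem_adjoin_of_forall_mem_commute hb fun y hy =>
    (commute_of_mem_adjoin_of_forall_mem_commute ha fun x hx => (hst x hx y hy).symm).symm

theorem IsCyclicAlgebra.nonempty_algEquiv_tensorProduct {F K₁ K₂ B₁ B₂ A : Type*} [Field F]
    [Field K₁] [Algebra F K₁] [FiniteDimensional F K₁] [Field K₂] [Algebra F K₂]
    [FiniteDimensional F K₂] [Ring B₁] [Algebra F B₁] [Ring B₂] [Algebra F B₂] [Ring A]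
    [Algebra F A] {σ : K₁ ≃ₐ[F] K₁} {φ : K₂ ≃ₐ[F] K₂} {w₁ : K₁} {w₂ : K₂}
    (hB₁ : IsCyclicAlgebra F K₁ σ w₁ B₁) (hB₂ : IsCyclicAlgebra F K₂ φ w₂ B₂)
    {j₁ : K₁ →ₐ[F] A} {j₂ : K₂ →ₐ[F] A} {U V : A}
    (hU : U ^ finrank F K₁ = j₁ w₁) (hUj : IsTwisted j₁ σ U)
    (hV : V ^ finrank F K₂ = j₂ w₂) (hVj : IsTwisted j₂ φ V)
    (hcomm : ∀ x ∈ insert U (Set.range j₁), ∀ y ∈ insert V (Set.range j₂), Commute x y)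
    (hgen : Algebra.adjoin F (insert U (Set.range j₁)) ⊔
      Algebra.adjoin F (insert V (Set.range j₂)) = ⊤)
    (hdim : finrank F A = finrank F K₁ * finrank F K₁ * (finrank F K₂ * finrank F K₂)) :
    Nonempty (A ≃ₐ[F] B₁ ⊗[F] B₂) := by
  obtain ⟨f₁, hf₁⟩ := hB₁.exists_algHom_range_eq hU hUj
  obtain ⟨f₂, hf₂⟩ := hB₂.exists_algHom_range_eq hV hVj
  have hf : ∀ b₁ b₂, Commute (f₁ b₁) (f₂ b₂) := fun b₁ b₂ =>
    Algebra.commute_of_mem_adjoin_of_mem_adjoin hcomm (hf₁ ▸ f₁.mem_range_self b₁)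
      (hf₂ ▸ f₂.mem_range_self b₂)
  let T := Algebra.TensorProduct.lift f₁ f₂ hf
  have hsurj : Surjective T := by
    rw [← AlgHom.range_eq_top, eq_top_iff, ← hgen, ← hf₁, ← hf₂, sup_le_iff]
    constructor
    · rintro _ ⟨b, rfl⟩
      exact ⟨b ⊗ₜ 1, by simp [T]⟩
    · rintro _ ⟨b, rfl⟩
      exact ⟨1 ⊗ₜ b, by simp [T]⟩
  have hdimT : finrank F (B₁ ⊗[F] B₂) = finrank F A := by
    rw [finrank_tensorProduct, hB₁.finrank_eq, hB₂.finrank_eq, hdim]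
  have hpos : 0 < finrank F A := by
    rw [hdim]
    have := finrank_pos (R := F) (M := K₁)
    have := finrank_pos (R := F) (M := K₂)
    positivity
  have := Module.finite_of_finrank_pos hpos
  have := Module.finite_of_finrank_pos (hdimT ▸ hpos)
  exact ⟨(AlgEquiv.ofBijective T
    ⟨(LinearMap.injective_iff_surjective_of_finrank_eq_finrank hdimT).2 hsurj, hsurj⟩).symm⟩

section CrossedProduct

variable {F L A : Type*} [Field F] [Field L] [Algebra F L] [Ring A] [Algebra F A]
  {ι : L →ₐ[F] A} {σ₁ σ₂ : L ≃ₐ[F] L} {u v : A} {c : L} {K₁ K₂ : IntermediateField F L}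

theorem IsTwisted.commute_of_fixed_generators (hu : IsTwisted ι σ₁ u) (hv : IsTwisted ι σ₂ v)
    {y : L} (hvu : v * u = u * v * ι y) (hc : σ₂ c * σ₁ (σ₂ y) = c)
    (hK₁ : ∀ x : K₁, σ₂ x = x) (hK₂ : ∀ x : K₂, σ₁ x = x) :
    ∀ x ∈ insert (ι c * u) (Set.range (ι.comp K₁.val)),
      ∀ y ∈ insert v (Set.range (ι.comp K₂.val)), Commute x y := by
  rintro _ (rfl | ⟨x, rfl⟩) _ (rfl | ⟨y, rfl⟩)
  · exact hu.commute_map_mul_left hv hvu hc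
  · exact ((Commute.all _ _).map ι).mul_left (hu.commute_of_fixed (hK₂ y))
  · exact (hv.commute_of_fixed (hK₁ x)).symm
  · exact (Commute.all _ _).map ι

theorem adjoin_sup_adjoin_eq_top_of_sumMulLinearMap_surjective [FiniteDimensional F L]
    {m₁ m₂ : ℕ} (h : Surjective (ι.sumMulLinearMap fun ij : Fin m₁ × Fin m₂ =>
      u ^ (ij.1 : ℕ) * v ^ (ij.2 : ℕ)))
    (hK : K₁ ⊔ K₂ = ⊤) (hc : c ≠ 0) :
    Algebra.adjoin F (insert (ι c * u) (Set.range (ι.comp K₁.val))) ⊔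
      Algebra.adjoin F (insert v (Set.range (ι.comp K₂.val))) = ⊤ := by
  set S₁ := Algebra.adjoin F (insert (ι c * u) (Set.range (ι.comp K₁.val)))
  set S₂ := Algebra.adjoin F (insert v (Set.range (ι.comp K₂.val)))
  have hιS : ∀ x, ι x ∈ S₁ ⊔ S₂ := map_mem_of_sup_eq_top hK ι
    (fun x => le_sup_left (a := S₁) (Algebra.subset_adjoin (Set.mem_insert_of_mem _ ⟨x, rfl⟩)))
    (fun x => le_sup_right (a := S₁) (Algebra.subset_adjoin (Set.mem_insert_of_mem _ ⟨x, rfl⟩)))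
  have huS : u ∈ S₁ ⊔ S₂ := by
    have : ι c * u ∈ S₁ ⊔ S₂ := le_sup_left (a := S₁) (Algebra.subset_adjoin (Set.mem_insert _ _))
    simpa [← mul_assoc, ← map_mul, inv_mul_cancel₀ hc] using mul_mem (hιS c⁻¹) this
  have hvS : v ∈ S₁ ⊔ S₂ := le_sup_right (a := S₁) (Algebra.subset_adjoin (Set.mem_insert _ _))
  exact Subalgebra.eq_top_of_sumMulLinearMap_surjective h hιS fun ij =>
    mul_mem (pow_mem huS _) (pow_mem hvS _)

end CrossedProduct

theorem schur_stmt19_general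
    (F : Type) [Field F]
    (n : ℕ+) (L : Type) [Field L] [Algebra F L] [IsCyclotomicExtension {(n : ℕ)} F L]
    (ζ : L)
    (σ₁ σ₂ : L ≃ₐ[F] L) (b₁ b₂ c₁ c₂ d : ℕ)
    (h1 : σ₁ ζ = ζ ^ b₁) (h2 : σ₂ ζ = ζ ^ b₂)
    (hGal : ∀ τ : L ≃ₐ[F] L, ∃! ij : Fin (orderOf σ₁) × Fin (orderOf σ₂),
      τ = σ₁ ^ (ij.1 : ℕ) * σ₂ ^ (ij.2 : ℕ))
    (A : Type) [Ring A] [Algebra F A]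
    (hA : IsTwoGenCrossedProduct F L σ₁ σ₂ (ζ ^ c₁) (ζ ^ c₂) (ζ ^ d) A)
    (c : L) (hc0 : c ≠ 0) (hcrel : σ₂ c * ζ ^ (d * b₁ * b₂) = c)
    (K₁ : IntermediateField F L) (hK₁ : K₁ = IntermediateField.fixedField (Subgroup.zpowers σ₂))
    (K₂ : IntermediateField F L) (hK₂ : K₂ = IntermediateField.fixedField (Subgroup.zpowers σ₁))
    (σ : K₁ ≃ₐ[F] K₁) (hσ : ∀ x : K₁, (algebraMap K₁ L) (σ x) = σ₁ (algebraMap K₁ L x))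
    (φ : K₂ ≃ₐ[F] K₂) (hφ : ∀ x : K₂, (algebraMap K₂ L) (φ x) = σ₂ (algebraMap K₂ L x))
    (w₁ : K₁) (hw₁ : (algebraMap K₁ L) w₁ =
      (∏ i ∈ Finset.range (orderOf σ₁), (σ₁ ^ i) c) * ζ ^ c₁)
    (w₂ : K₂) (hw₂ : (algebraMap K₂ L) w₂ = ζ ^ c₂) :
    ∀ (B₁ B₂ : Type) [Ring B₁] [Algebra F B₁] [Ring B₂] [Algebra F B₂],
      IsCyclicAlgebra F K₁ σ w₁ B₁ → IsCyclicAlgebra F K₂ φ w₂ B₂ →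
        Nonempty (A ≃ₐ[F] (B₁ ⊗[F] B₂)) := by
  intro B₁ B₂ _ _ _ _ hB₁ hB₂
  have := IsCyclotomicExtension.isGalois {(n : ℕ)} F L
  have := IsCyclotomicExtension.finiteDimensional {(n : ℕ)} F L
  have hbij : IsUniquePowerProduct σ₁ σ₂ :=
    (bijective_iff_existsUnique _).2 fun τ => by simpa only [eq_comm] using hGal τ
  subst hK₁ hK₂
  obtain ⟨ι, u, v, hu, hv, huι, hvι, hvu, hAbij⟩ := hA
  have hAbij' : Bijective (ι.sumMulLinearMap fun ij : Fin (orderOf σ₁) × Fin (orderOf σ₂) =>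
      (u : A) ^ (ij.1 : ℕ) * (v : A) ^ (ij.2 : ℕ)) := by
    rw [AlgHom.coe_sumMulLinearMap]
    simpa only [mul_assoc] using hAbij
  have hζ : σ₂ c * σ₁ (σ₂ (ζ ^ d)) = c := by
    rwa [map_pow, h2, map_pow, map_pow, h1, ← pow_mul, ← pow_mul,
      show b₁ * (b₂ * d) = d * b₁ * b₂ by ring]
  refine IsCyclicAlgebra.nonempty_algEquiv_tensorProduct hB₁ hB₂ (U := ι c * u) (V := v)
    ?_ ((IsTwisted.map_mul_left huι c).comp _ hσ) ?_ (IsTwisted.comp hvι _ hφ)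
    (IsTwisted.commute_of_fixed_generators huι hvι hvu hζ
      (fun x => (mem_fixedField_iff _ _).1 x.2 σ₂ (mem_zpowers σ₂))
      (fun x => (mem_fixedField_iff _ _).1 x.2 σ₁ (mem_zpowers σ₁)))
    (adjoin_sup_adjoin_eq_top_of_sumMulLinearMap_surjective hAbij'.2
      hbij.fixedField_zpowers_sup_eq_top hc0) ?_
  · rw [hbij.finrank_fixedField_zpowers_right, IsTwisted.map_mul_left_pow huι, hu,
      ← map_mul, ← hw₁]
    rfl
  · rw [hbij.finrank_fixedField_zpowers_left, hv, ← hw₂]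
    rfl
  · rw [ι.finrank_eq_of_sumMulLinearMap_bijective hAbij', Fintype.card_prod, Fintype.card_fin,
      Fintype.card_fin, hbij.finrank_eq, hbij.finrank_fixedField_zpowers_right,
      hbij.finrank_fixedField_zpowers_left]
    ring

theorem schur_stmt19
    (F : Type) [Field F] [NumberField F] [IsGalois ℚ F]
    (hab : ∀ g h : F ≃ₐ[ℚ] F, g * h = h * g)
    (n : ℕ+) (L : Type) [Field L] [Algebra F L] [IsCyclotomicExtension {(n : ℕ)} F L]
    (ζ : L) (hζ : IsPrimitiveRoot ζ (n : ℕ))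
    (σ₁ σ₂ : L ≃ₐ[F] L) (b₁ b₂ c₁ c₂ d : ℕ)
    (h1 : σ₁ ζ = ζ ^ b₁) (h2 : σ₂ ζ = ζ ^ b₂)
    (hGal : ∀ τ : L ≃ₐ[F] L, ∃! ij : Fin (orderOf σ₁) × Fin (orderOf σ₂),
      τ = σ₁ ^ (ij.1 : ℕ) * σ₂ ^ (ij.2 : ℕ))
    (A : Type) [Ring A] [Algebra F A]
    (hA : IsTwoGenCrossedProduct F L σ₁ σ₂ (ζ ^ c₁) (ζ ^ c₂) (ζ ^ d) A)
    (c : L) (hc0 : c ≠ 0) (hcrel : σ₂ c * ζ ^ (d * b₁ * b₂) = c)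
    (hcuF : (∏ i ∈ Finset.range (orderOf σ₁), (σ₁ ^ i) c) * ζ ^ c₁ ∈
      Set.range (algebraMap F L))
    (K₁ : IntermediateField F L) (hK₁ : K₁ = IntermediateField.fixedField (Subgroup.zpowers σ₂))
    (K₂ : IntermediateField F L) (hK₂ : K₂ = IntermediateField.fixedField (Subgroup.zpowers σ₁))
    (σ : K₁ ≃ₐ[F] K₁) (hσ : ∀ x : K₁, (algebraMap K₁ L) (σ x) = σ₁ (algebraMap K₁ L x))
    (φ : K₂ ≃ₐ[F] K₂) (hφ : ∀ x : K₂, (algebraMap K₂ L) (φ x) = σ₂ (algebraMap K₂ L x))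
    (w₁ : K₁) (hw₁ : (algebraMap K₁ L) w₁ =
      (∏ i ∈ Finset.range (orderOf σ₁), (σ₁ ^ i) c) * ζ ^ c₁)
    (w₂ : K₂) (hw₂ : (algebraMap K₂ L) w₂ = ζ ^ c₂) :
    ∀ (B₁ B₂ : Type) [Ring B₁] [Algebra F B₁] [Ring B₂] [Algebra F B₂],
      IsCyclicAlgebra F K₁ σ w₁ B₁ → IsCyclicAlgebra F K₂ φ w₂ B₂ →
        Nonempty (A ≃ₐ[F] (B₁ ⊗[F] B₂)) :=
  schur_stmt19_general F n L ζ σ₁ σ₂ b₁ b₂ c₁ c₂ d h1 h2 hGal A hA c hc0 hcrel K₁ hK₁ K₂ hK₂ σ hσ φ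
    hφ w₁ hw₁ w₂ hw₂
end
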